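/- For real numbers a, b, the function φ(a,b) = −ab + min(0,a)² + min(0,b)² satisfies φ(a,b) = 0 if and only if a ≥ 0, b ≥ 0, and ab = 0. -/
import Mathlib


theorem stmt_2 (a b : ℝ) :
    -(a * b) + min 0 a ^ 2 + min 0 b ^ 2 = 0 ↔ (0 ≤ a ∧ 0 ≤ b ∧ a * b = 0) := by
  constructor
  · intro h
    rcases le_or_gt 0 a with ha | ha <;> rcases le_or_gt 0 b with hb | hb
    · rw [min_eq_left ha, min_eq_left hb] at h
      refine ⟨ha, hb, by linarith [sq_nonneg (0:ℝ)]⟩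
    · rw [min_eq_left ha, min_eq_right hb.le] at h
      nlinarith
    · rw [min_eq_right ha.le, min_eq_left hb] at h
      nlinarith
    · rw [min_eq_right ha.le, min_eq_right hb.le] at h
      nlinarith [sq_nonneg (a - b), sq_nonneg (a + b)]
  · rintro ⟨ha, hb, hab⟩
    rw [min_eq_left ha, min_eq_left hb, hab]
    ring
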